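/- arXiv:1606.07715 — 3 statements merged into one kernel-verified Lean document; each statement's English description precedes it below -/
import Mathlib

section
/- Let I ⊆ [0,1] be a set of real numbers satisfying the DCC and let J₀ ⊆ [0,1] be a finite set of real numbers. Then the set I₁ = { i ∈ I : there exist positive integers k and m and an element f ∈ D(I) such that (m − 1 + f + k·i)/m ∈ J₀ } is a finite set. -/
/-- A set `S ⊆ ℝ` satisfies the descending chain condition (DCC) if every
non-increasing sequence of elements of `S` is eventually constant. -/
def SatisfiesDCC (S : Set ℝ) : Prop :=
  ∀ f : ℕ → ℝ, (∀ n, f n ∈ S) → Antitone f → ∃ N, ∀ m, N ≤ m → f m = f N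

/-- The derived set `D(I)` of a set `I ⊆ [0,1]`:
`D(I) = { (r − 1 + i_1 + … + i_p)/r : r ≥ 1, p ≥ 0, i_j ∈ I }`. -/
def paperDerivedSet (I : Set ℝ) : Set ℝ :=
  {x | ∃ (r p : ℕ), 0 < r ∧ ∃ i : Fin p → ℝ, (∀ j, i j ∈ I) ∧
    x = ((r : ℝ) - 1 + ∑ j, i j) / r}

/-!
Let `W` be the additive monoid generated by `I`. Since `I` is well-founded and nonnegative, so
is `W`. Clearing denominators in `(m - 1 + f + k i)/m = j` with `f = (r - 1 + s)/r` gives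
`1 - m r (1 - j) = s + r k i`, so `c - i ∈ W` for `c = 1 - m r (1 - j)`. As `c ≥ 0` and
`j ≤ 1`, only finitely many such `c` arise from the finite set `J₀`. For each `c`, the elements
`i ∈ I` with `c - i ∈ W` are finite in number: an increasing sequence of them would make
`c - i` strictly decrease in the well-founded set `W`.
-/

open Set

lemma SatisfiesDCC.isWF {S : Set ℝ} (h : SatisfiesDCC S) : S.IsWF := by
  rw [isWF_iff_no_descending_seq]
  intro f hf hmem
  obtain ⟨N, hN⟩ := h f hmem hf.antitone
  exact (hf N.lt_succ_self).ne (hN (N + 1) N.le_succ)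

lemma Set.IsWF.finite_setOf_sub_mem {α : Type*} [AddCommGroup α] [LinearOrder α]
    [IsOrderedAddMonoid α] {s t : Set α} (hs : s.IsWF) (ht : t.IsWF) (a : α) :
    {x ∈ s | a - x ∈ t}.Finite :=
  ((AddAntidiagonal.finite_of_isWF hs ht a).image Prod.fst).subset fun x hx =>
    ⟨(x, a - x), ⟨hx.1, hx.2, add_sub_cancel x a⟩, rfl⟩

lemma finite_image_sub_natCast_mul {α : Type*} [Field α] [LinearOrder α]
    [IsStrictOrderedRing α] [FloorSemiring α] {b t : α} (ht : 0 ≤ t) :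
    ((fun n : ℕ => b - n * t) '' {n | n * t ≤ b}).Finite := by
  rcases ht.eq_or_lt with rfl | ht
  · exact (finite_singleton b).subset (by rintro _ ⟨n, -, rfl⟩; simp)
  · refine ((finite_Iic ⌊b / t⌋₊).subset fun n hn => ?_).image _
    exact Nat.le_floor ((le_div_iff₀ ht).mpr hn)

lemma exists_mul_eq_of_mem_paperDerivedSet {I : Set ℝ} {f : ℝ} (hf : f ∈ paperDerivedSet I) :
    ∃ r : ℕ, 0 < r ∧ ∃ s ∈ AddSubmonoid.closure I, f * r = r - 1 + s := by
  obtain ⟨r, p, hr, i, hi, rfl⟩ := hf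
  refine ⟨r, hr, ∑ j, i j, sum_mem fun j _ => AddSubmonoid.subset_closure (hi j), ?_⟩
  have : (r : ℝ) ≠ 0 := by positivity
  field_simp

lemma exists_one_sub_mul_sub_mem_closure {I : Set ℝ} (hI : ∀ x ∈ I, 0 ≤ x) {i f j : ℝ}
    {k m : ℕ} (hi : i ∈ I) (hk : 0 < k) (hm : 0 < m) (hf : f ∈ paperDerivedSet I)
    (hj : ((m : ℝ) - 1 + f + k * i) / m = j) :
    ∃ n : ℕ, n * (1 - j) ≤ 1 ∧ 1 - n * (1 - j) - i ∈ AddSubmonoid.closure I := by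
  obtain ⟨r, hr, s, hs, hfr⟩ := exists_mul_eq_of_mem_paperDerivedSet hf
  have hjm : j * m = m - 1 + f + k * i := by
    have : (m : ℝ) ≠ 0 := by positivity
    rw [← hj]; field_simp
  have hrk : 1 ≤ r * k := Nat.mul_pos hr hk
  have hs0 : 0 ≤ s := AddSubmonoid.closure_le (S := AddSubmonoid.nonneg ℝ) |>.mpr hI hs
  have hn : ((m * r : ℕ) : ℝ) * (1 - j) = 1 - (s + ((r * k - 1 : ℕ) + 1 : ℝ) * i) := by
    rw [Nat.cast_sub hrk]; push_cast
    linear_combination -hfr - (r : ℝ) * hjm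
  have hsplit : 1 - ((m * r : ℕ) : ℝ) * (1 - j) - i = s + (r * k - 1 : ℕ) • i := by
    rw [hn, nsmul_eq_mul]; ring
  refine ⟨m * r, ?_, hsplit ▸ add_mem hs (nsmul_mem (AddSubmonoid.subset_closure hi) _)⟩
  rw [hn]
  nlinarith [hI i hi]

theorem stmt_0 (I : Set ℝ) (hI : I ⊆ Set.Icc 0 1) (hIdcc : SatisfiesDCC I)
    (J₀ : Set ℝ) (hJ₀ : J₀ ⊆ Set.Icc 0 1) (hJ₀fin : J₀.Finite) :
    Set.Finite {i ∈ I | ∃ k m : ℕ, 0 < k ∧ 0 < m ∧ ∃ f ∈ paperDerivedSet I,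
      ((m : ℝ) - 1 + f + k * i) / m ∈ J₀} := by
  have hI0 : ∀ x ∈ I, 0 ≤ x := fun x hx => (hI hx).1
  have hW : (AddSubmonoid.closure I : Set ℝ).IsWF :=
    (hIdcc.isWF.isPWO.addSubmonoid_closure hI0).isWF
  have hC : (⋃ j ∈ J₀, (fun n : ℕ => 1 - n * (1 - j)) '' {n | n * (1 - j) ≤ 1}).Finite :=
    hJ₀fin.biUnion fun j hj => finite_image_sub_natCast_mul (sub_nonneg.mpr (hJ₀ hj).2)
  refine (hC.biUnion fun c _ => hIdcc.isWF.finite_setOf_sub_mem hW c).subset ?_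
  rintro i ⟨hi, k, m, hk, hm, f, hf, hj⟩
  obtain ⟨n, hn, hmem⟩ := exists_one_sub_mul_sub_mem_closure hI0 hi hk hm hf rfl
  exact mem_biUnion (mem_biUnion hj ⟨n, hn, rfl⟩) ⟨hi, hmem⟩
end

section
/- Let I ⊆ [0,1] be a set of real numbers. Then I satisfies the DCC if and only if D(I) ∩ [0,1] satisfies the DCC. -/
open Set

theorem satisfiesDCC_iff_isWF (S : Set ℝ) : SatisfiesDCC S ↔ S.IsWF := by
  constructor
  · intro h
    rw [isWF_iff_no_descending_seq]
    intro f hf hmem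
    obtain ⟨N, hN⟩ := h f hmem hf.antitone
    exact (hf N.lt_succ_self).ne (hN (N + 1) N.le_succ)
  · intro h f hmem hf
    have hwf : (range f).IsWF := h.mono (range_subset_iff.2 hmem)
    have hne : (range f).Nonempty := range_nonempty f
    obtain ⟨N, hN⟩ := hwf.min_mem hne
    refine ⟨N, fun m hm => le_antisymm (hf hm) ?_⟩
    rw [hN]
    exact hwf.min_le hne (mem_range_self m)

theorem Set.IsWF.inter_Iic_of_forall_lt {α : Type*} [Preorder α] {S : Set α} {a : α}
    (h : ∀ c < a, (S ∩ Iic c).IsWF) : (S ∩ Iic a).IsWF := by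
  rw [isWF_iff_no_descending_seq]
  intro f hf hmem
  have hf1 : f 1 < a := (hf zero_lt_one).trans_le (hmem 0).2
  refine isWF_iff_no_descending_seq.1 (h (f 1) hf1) (fun n => f (n + 1))
    (hf.comp_strictMono (strictMono_id.add_const 1)) fun n => ⟨(hmem _).1, ?_⟩
  exact hf.antitone (Nat.le_add_left 1 n)

theorem subset_paperDerivedSet (I : Set ℝ) : I ⊆ paperDerivedSet I :=
  fun x hx => ⟨1, 1, one_pos, fun _ => x, fun _ => hx, by simp⟩

theorem paperDerivedSet_inter_Iic_subset {I : Set ℝ} (hI : I ⊆ Ici 0) {c : ℝ} (hc : c < 1) :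
    paperDerivedSet I ∩ Iic c ⊆ ⋃ r ∈ Finset.range (⌈(1 - c)⁻¹⌉₊ + 1),
      (fun s => ((r : ℝ) - 1 + s) / r) '' (AddSubmonoid.closure I : Set ℝ) := by
  rintro x ⟨⟨r, p, hr, i, hi, rfl⟩, hxc⟩
  have hs_nonneg : 0 ≤ ∑ j, i j := Finset.sum_nonneg fun j _ => hI (hi j)
  have hr_pos : (0 : ℝ) < r := Nat.cast_pos.2 hr
  have hr_le : (r : ℝ) ≤ (1 - c)⁻¹ := by
    rw [mem_Iic, div_le_iff₀ hr_pos] at hxc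
    rw [le_inv_comm₀ hr_pos (sub_pos.2 hc), inv_eq_one_div, le_div_iff₀ hr_pos]
    linarith
  refine mem_biUnion (x := r) ?_ ⟨∑ j, i j, ?_, rfl⟩
  · exact Finset.mem_coe.2 <| Finset.mem_range_succ_iff.2 <|
      Nat.cast_le.1 (hr_le.trans (Nat.le_ceil _))
  · exact AddSubmonoid.sum_mem _ fun j _ => AddSubmonoid.subset_closure (hi j)

theorem isWF_paperDerivedSet_inter_Iic_one {I : Set ℝ} (hI : I ⊆ Ici 0) (hwf : I.IsWF) :
    (paperDerivedSet I ∩ Iic 1).IsWF := by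
  refine IsWF.inter_Iic_of_forall_lt fun c hc =>
    IsWF.mono ?_ (paperDerivedSet_inter_Iic_subset hI hc)
  have hsums : (AddSubmonoid.closure I : Set ℝ).IsPWO := hwf.isPWO.addSubmonoid_closure hI
  rw [← Finset.sup_set_eq_biUnion, Finset.isWF_sup]
  exact fun r _ => (hsums.image_of_monotone fun a b hab => by gcongr).isWF

theorem stmt_1 (I : Set ℝ) (hI : I ⊆ Set.Icc 0 1) :
    SatisfiesDCC I ↔ SatisfiesDCC (paperDerivedSet I ∩ Set.Icc 0 1) := by
  rw [satisfiesDCC_iff_isWF, satisfiesDCC_iff_isWF]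
  refine ⟨fun h => ?_, fun h => h.mono fun x hx => ⟨subset_paperDerivedSet I hx, hI hx⟩⟩
  exact (isWF_paperDerivedSet_inter_Iic_one (fun x hx => (hI hx).1) h).mono
    (inter_subset_inter_right _ Icc_subset_Iic_self)
end

section
/- Let J = { 1 − 1/n : n a positive integer } ∪ {1}. Then the minimum of the set of positive real numbers of the form 2g − 2 + b_1 + … + b_p, where g and p are nonnegative integers and b_1, …, b_p ∈ J, equals 1/42. That is, every positive number of this form is at least 1/42, and 1/42 = 2·0 − 2 + (1 − 1/2) + (1 − 1/3) + (1 − 1/7) is of this form. (In the notation of the paper, v(1,J) = 1/42 for the standard coefficient set J.) -/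
/-!
The nonzero elements of `J` are at least `1/2`, and `J` has no element strictly between
`1 - 1/k` and `1 - 1/(k+1)`. For `g ≥ 1` positivity of `2g - 2 + ∑ bⱼ` forces it to be at least
`1/2`. For `g = 0` the nonzero `bⱼ` must sum to more than `2`, so there are at least three of them.
Four or more give at least `2 + 1/6` (or `5/2`), and three reduce to the classical fact that
`1/a + 1/b + 1/c < 1` implies `1/a + 1/b + 1/c ≤ 41/42`, with equality at `(2, 3, 7)`.
-/

/-- The standard coefficient set `J = { 1 − 1/n : n ∈ ℕ, n ≥ 1 } ∪ {1}`. -/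
def standardSet : Set ℝ :=
  {x | ∃ n : ℕ, 0 < n ∧ x = 1 - 1 / (n : ℝ)} ∪ {1}

section standardSet

variable {y : ℝ}

lemma nonneg_of_mem_standardSet (hy : y ∈ standardSet) : 0 ≤ y := by
  rcases hy with ⟨n, hn, rfl⟩ | rfl
  · have : (1 : ℝ) ≤ n := by exact_mod_cast hn
    have : 1 / (n : ℝ) ≤ 1 := by rwa [div_le_one (by linarith)]
    linarith
  · exact zero_le_one

lemma le_one_of_mem_standardSet (hy : y ∈ standardSet) : y ≤ 1 := by
  rcases hy with ⟨n, hn, rfl⟩ | rfl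
  · have : 0 < 1 / (n : ℝ) := by positivity
    linarith
  · exact le_rfl

lemma one_sub_one_div_succ_le_of_mem_standardSet (k : ℕ) (hy : y ∈ standardSet)
    (h : 1 - 1 / (k : ℝ) < y) : 1 - 1 / ((k : ℝ) + 1) ≤ y := by
  rcases hy with ⟨n, hn, rfl⟩ | rfl
  · have hn₀ : (0 : ℝ) < n := by exact_mod_cast hn
    have hkn : k < n := by
      rcases Nat.eq_zero_or_pos k with rfl | hk
      · exact hn
      · have : 1 / (n : ℝ) < 1 / k := by linarith
        exact_mod_cast (one_div_lt_one_div hn₀ (by exact_mod_cast hk)).mp this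
    have : (k : ℝ) + 1 ≤ n := by exact_mod_cast hkn
    have : 1 / (n : ℝ) ≤ 1 / ((k : ℝ) + 1) := one_div_le_one_div_of_le (by positivity) this
    linarith
  · have : 0 < 1 / ((k : ℝ) + 1) := by positivity
    linarith

lemma one_half_le_of_mem_standardSet (hy : y ∈ standardSet) (h : 0 < y) : 1 / 2 ≤ y := by
  have := one_sub_one_div_succ_le_of_mem_standardSet 1 hy (by norm_num; linarith)
  norm_num at this
  linarith

end standardSet

lemma two_add_one_div_42_le_add_add {a b c : ℝ} (ha : a ∈ standardSet) (hb : b ∈ standardSet)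
    (hc : c ∈ standardSet) (h : 2 < a + b + c) : 2 + 1 / 42 ≤ a + b + c := by
  wlog hab : a ≤ b generalizing a b
  · linarith [this hb ha (by linarith) (by linarith)]
  wlog hbc : b ≤ c generalizing a b c
  · rcases le_total a c with hac | hca
    · linarith [this hb ha hc (by linarith) hac (by linarith)]
    · linarith [this hb hc ha (by linarith) hca hab]
  have gap := fun (k : ℕ) {y : ℝ} (hy : y ∈ standardSet) (h : 1 - 1 / (k : ℝ) < y) ↦
    one_sub_one_div_succ_le_of_mem_standardSet k hy h
  have hb₁ := le_one_of_mem_standardSet hb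
  have hc₁ := le_one_of_mem_standardSet hc
  have ha₂ := one_half_le_of_mem_standardSet ha (by linarith)
  rcases lt_or_ge (1 / 2) a with ha₂' | ha₂'
  · have ha₃ := gap 2 ha (by norm_num; linarith)
    have hc₄ := gap 3 hc (by norm_num; linarith)
    norm_num at ha₃ hc₄
    linarith
  have hb₃ := gap 2 hb (by norm_num; linarith)
  have hc₅ := gap 4 hc (by norm_num; linarith)
  rcases lt_or_ge (2 / 3) b with hb₃' | hb₃'
  · have hb₄ := gap 3 hb (by norm_num; linarith)
    norm_num at hb₄ hc₅
    linarith
  · have hc₇ := gap 6 hc (by norm_num; linarith)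
    norm_num at hb₃ hc₇
    linarith

lemma two_add_one_div_42_le_sum {ι : Type*} (s : Finset ι) (b : ι → ℝ)
    (hb : ∀ i ∈ s, b i ∈ standardSet) (h : 2 < ∑ i ∈ s, b i) :
    2 + 1 / 42 ≤ ∑ i ∈ s, b i := by
  classical
  set T := s.filter (b · ≠ 0)
  rw [← Finset.sum_filter_ne_zero] at h ⊢
  have hT : ∀ i ∈ T, b i ∈ standardSet ∧ 1 / 2 ≤ b i := fun i hi ↦ by
    obtain ⟨his, hi₀⟩ := Finset.mem_filter.mp hi
    exact ⟨hb i his, one_half_le_of_mem_standardSet (hb i his)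
      (lt_of_le_of_ne (nonneg_of_mem_standardSet (hb i his)) (Ne.symm hi₀))⟩
  have hlow : (T.card : ℝ) / 2 ≤ ∑ i ∈ T, b i := by
    have := T.card_nsmul_le_sum b (1 / 2) fun i hi ↦ (hT i hi).2
    rwa [nsmul_eq_mul, ← div_eq_mul_one_div] at this
  have hup : ∑ i ∈ T, b i ≤ T.card := by
    have := T.sum_le_card_nsmul b 1 fun i hi ↦ le_one_of_mem_standardSet (hT i hi).1
    rwa [nsmul_eq_mul, mul_one] at this
  rcases lt_trichotomy T.card 4 with hcard | hcard | hcard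
  · obtain hcard | hcard : T.card ≤ 2 ∨ T.card = 3 := by omega
    · have : (T.card : ℝ) ≤ 2 := by exact_mod_cast hcard
      linarith
    obtain ⟨i, j, k, hij, hik, hjk, hTijk⟩ := Finset.card_eq_three.mp hcard
    have hsum : ∑ l ∈ T, b l = b i + b j + b k := by
      simp [hTijk, Finset.sum_insert, hij, hik, hjk, add_assoc]
    have hmem : ∀ l ∈ ({i, j, k} : Finset ι), b l ∈ standardSet :=
      hTijk ▸ fun l hl ↦ (hT l hl).1
    rw [hsum] at h ⊢
    exact two_add_one_div_42_le_add_add (hmem i (by simp)) (hmem j (by simp)) (hmem k (by simp)) h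
  · obtain ⟨i, hi, hbi⟩ : ∃ i ∈ T, 1 / 2 < b i := by
      refine Finset.exists_lt_of_sum_lt ?_
      rw [Finset.sum_const, hcard]
      norm_num
      linarith
    have hbi₃ := one_sub_one_div_succ_le_of_mem_standardSet 2 (hT i hi).1 (by norm_num; linarith)
    have hrest := (T.erase i).card_nsmul_le_sum b (1 / 2)
      fun l hl ↦ (hT l (Finset.mem_of_mem_erase hl)).2
    rw [Finset.card_erase_of_mem hi, hcard, ← Finset.add_sum_erase T b hi] at *
    norm_num at hbi₃ hrest
    linarith
  · have : (5 : ℝ) ≤ T.card := by exact_mod_cast hcard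
    linarith

lemma one_half_le_sum {ι : Type*} (s : Finset ι) (b : ι → ℝ)
    (hb : ∀ i ∈ s, b i ∈ standardSet) (h : 0 < ∑ i ∈ s, b i) : 1 / 2 ≤ ∑ i ∈ s, b i := by
  obtain ⟨i, hi, hbi⟩ : ∃ i ∈ s, 0 < b i :=
    Finset.exists_lt_of_sum_lt (by rwa [Finset.sum_const_zero])
  have hle : b i ≤ ∑ j ∈ s, b j :=
    Finset.single_le_sum (fun j hj ↦ nonneg_of_mem_standardSet (hb j hj)) hi
  linarith [one_half_le_of_mem_standardSet (hb i hi) hbi]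

theorem stmt_3 :
    IsLeast {x : ℝ | 0 < x ∧ ∃ (g p : ℕ) (b : Fin p → ℝ),
      (∀ j, b j ∈ standardSet) ∧ x = 2 * (g : ℝ) - 2 + ∑ j, b j} (1 / 42) := by
  constructor
  · refine ⟨by norm_num, 0, 3, ![1 / 2, 2 / 3, 6 / 7], ?_, ?_⟩
    · intro j
      fin_cases j
      exacts [Or.inl ⟨2, by norm_num⟩, Or.inl ⟨3, by norm_num⟩, Or.inl ⟨7, by norm_num⟩]
    · simp [Fin.sum_univ_three]
      norm_num
  · rintro x ⟨hx, g, p, b, hb, rfl⟩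
    have hb' : ∀ j ∈ Finset.univ, b j ∈ standardSet := fun j _ ↦ hb j
    rcases g with _ | _ | g
    · push_cast at hx ⊢
      linarith [two_add_one_div_42_le_sum _ b hb' (by linarith)]
    · push_cast at hx ⊢
      linarith [one_half_le_sum _ b hb' (by linarith)]
    · have hS := Finset.sum_nonneg fun j (_ : j ∈ Finset.univ) ↦ nonneg_of_mem_standardSet (hb j)
      push_cast
      linarith [(g.cast_nonneg : (0 : ℝ) ≤ g)]
end
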